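/- Let y : [0,∞) → E be a nonconformity flow trajectory, let m > 0 and t₀ ≥ 0, assume ‖∇S(y(t))‖ ≥ m for all t ≥ t₀, and let y_∞ = lim_{t→∞} y(t) be the limit of the trajectory. Then for every t ≥ t₀, ‖y(t) − y_∞‖ ≤ (1/m)·|S(y(0)) − τ|·e^{−λ t}; in particular the trajectory converges to its limit exponentially fast with rate λ. -/

import Mathlib

/-!
Along the flow, `S(y(t)) - τ` satisfies the linear equation `f' = -λ f` (the velocity is chosen
so that `⟪∇S, v⟫ = -λ (S - τ)`), hence `S(y(t)) - τ = (S(y(0)) - τ) e^{-λt}`. Once `‖∇S‖ ≥ m`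
the speed is therefore at most `λ |S(y(0)) - τ| e^{-λt} / m`, and integrating this speed over
`[t, ∞)` bounds the distance from `y(t)` to the limit.
-/

open scoped RealInnerProductSpace

noncomputable def ncVel {n : ℕ} (S : EuclideanSpace ℝ (Fin n) → ℝ) (τ lam : ℝ)
    (y : EuclideanSpace ℝ (Fin n)) : EuclideanSpace ℝ (Fin n) :=
  (-lam * (S y - τ) / ‖gradient S y‖ ^ 2) • gradient S y

open Real Filter Topology

theorem eq_mul_exp_of_hasDerivAt_eq_mul {f : ℝ → ℝ} {c a : ℝ}
    (hf : ∀ t, a ≤ t → HasDerivAt f (c * f t) t) {t : ℝ} (ht : a ≤ t) :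
    f t = f a * exp (c * (t - a)) := by
  set g : ℝ → ℝ := fun u => f u * exp (-c * (u - a))
  have hg : ∀ u, a ≤ u → HasDerivAt g 0 u := by
    intro u hu
    have hexp : HasDerivAt (fun u => exp (-c * (u - a))) (exp (-c * (u - a)) * -c) u := by
      simpa using (((hasDerivAt_id u).sub_const a).const_mul (-c)).exp
    exact ((hf u hu).mul hexp).congr_deriv (by ring)
  have hconst : g t = g a :=
    constant_of_has_deriv_right_zero (fun u hu => (hg u hu.1).continuousAt.continuousWithinAt)
      (fun u hu => (hg u hu.1).hasDerivWithinAt) t ⟨ht, le_rfl⟩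
  calc f t = g t * exp (c * (t - a)) := by
        simp only [g, mul_assoc, ← exp_add, neg_mul, neg_add_cancel, exp_zero, mul_one]
    _ = g a * exp (c * (t - a)) := by rw [hconst]
    _ = f a * exp (c * (t - a)) := by simp [g]

theorem norm_sub_le_of_norm_deriv_le_exp {E : Type*} [NormedAddCommGroup E] [NormedSpace ℝ E]
    {f f' : ℝ → E} {L : E} {C lam t : ℝ} (hlam : 0 < lam)
    (hf : ∀ u, t ≤ u → HasDerivAt f (f' u) u)
    (hbound : ∀ u, t ≤ u → ‖f' u‖ ≤ C * lam * exp (-lam * u))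
    (hL : Tendsto f atTop (𝓝 L)) :
    ‖f t - L‖ ≤ C * exp (-lam * t) := by
  set B : ℝ → ℝ := fun u => C * (exp (-lam * t) - exp (-lam * u))
  have hB : ∀ u, HasDerivAt B (C * lam * exp (-lam * u)) u := by
    intro u
    have hexp : HasDerivAt (fun u => exp (-lam * u)) (exp (-lam * u) * -lam) u := by
      simpa using ((hasDerivAt_id u).const_mul (-lam)).exp
    exact (((hasDerivAt_const u _).sub hexp).const_mul C).congr_deriv (by ring)
  have hstep : ∀ s, t ≤ s → ‖f s - f t‖ ≤ B s := fun s hs =>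
    image_norm_le_of_norm_deriv_right_le_deriv_boundary (f := fun u => f u - f t)
      (fun u hu => ((hf u hu.1).sub_const _).continuousAt.continuousWithinAt)
      (fun u hu => ((hf u hu.1).sub_const _).hasDerivWithinAt) (by simp [B]) hB
      (fun u hu => hbound u hu.1) ⟨hs, le_rfl⟩
  have hBlim : Tendsto B atTop (𝓝 (C * exp (-lam * t))) := by
    have hdecay : Tendsto (fun u => exp (-lam * u)) atTop (𝓝 0) :=
      tendsto_exp_atBot.comp (tendsto_id.const_mul_atTop_of_neg (neg_neg_of_pos hlam))
    simpa [B] using ((tendsto_const_nhds (x := exp (-lam * t))).sub hdecay).const_mul C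
  rw [norm_sub_rev]
  exact le_of_tendsto_of_tendsto ((hL.sub_const _).norm) hBlim
    (eventually_atTop.2 ⟨t, hstep⟩)

section Flow

variable {n : ℕ} {S : EuclideanSpace ℝ (Fin n) → ℝ} {τ lam : ℝ} {x : EuclideanSpace ℝ (Fin n)}

theorem inner_gradient_ncVel (hx : gradient S x ≠ 0) :
    ⟪gradient S x, ncVel S τ lam x⟫ = -lam * (S x - τ) := by
  have hnorm : ‖gradient S x‖ ≠ 0 := norm_ne_zero_iff.2 hx
  rw [ncVel, real_inner_smul_right, real_inner_self_eq_norm_sq]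
  field_simp

theorem norm_ncVel : ‖ncVel S τ lam x‖ = |lam| * |S x - τ| / ‖gradient S x‖ := by
  rcases eq_or_ne ‖gradient S x‖ 0 with h | h
  · simp [ncVel, h]
  · rw [ncVel, norm_smul, norm_div, norm_mul, norm_neg, norm_pow, norm_norm]
    simp only [Real.norm_eq_abs]
    field_simp

theorem norm_ncVel_le {m : ℝ} (hm : 0 < m) (hx : m ≤ ‖gradient S x‖) :
    ‖ncVel S τ lam x‖ ≤ |lam| * |S x - τ| / m := by
  rw [norm_ncVel]
  exact div_le_div_of_nonneg_left (by positivity) hm hx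

theorem HasDerivAt.sub_threshold_of_ncVel {y : ℝ → EuclideanSpace ℝ (Fin n)} {t : ℝ}
    (hS : DifferentiableAt ℝ S (y t)) (hgrad : gradient S (y t) ≠ 0)
    (hy : HasDerivAt y (ncVel S τ lam (y t)) t) :
    HasDerivAt (fun u => S (y u) - τ) (-lam * (S (y t) - τ)) t := by
  have hcomp := hS.hasGradientAt.hasFDerivAt.comp_hasDerivAt t hy
  rw [InnerProductSpace.toDual_apply_apply, inner_gradient_ncVel hgrad] at hcomp
  exact hcomp.sub_const τ

end Flow

/-- if `‖∇S(y(t))‖ ≥ m` for `t ≥ t₀` and `y(t) → y_∞`, then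
`‖y(t) - y_∞‖ ≤ (1/m) |S(y(0)) - τ| e^{-λ t}` for every `t ≥ t₀`. -/
theorem pointwise_exponential_convergence {n : ℕ} (S : EuclideanSpace ℝ (Fin n) → ℝ)
    (hS : Differentiable ℝ S) (τ lam : ℝ) (hlam : 0 < lam)
    (y : ℝ → EuclideanSpace ℝ (Fin n))
    (hy : ∀ t : ℝ, 0 ≤ t → HasDerivAt y (ncVel S τ lam (y t)) t)
    (hgrad : ∀ t : ℝ, 0 ≤ t → gradient S (y t) ≠ 0)
    (m t₀ : ℝ) (hm : 0 < m) (ht₀ : 0 ≤ t₀)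
    (hlow : ∀ t : ℝ, t₀ ≤ t → m ≤ ‖gradient S (y t)‖)
    (yinf : EuclideanSpace ℝ (Fin n))
    (hlim : Filter.Tendsto y Filter.atTop (nhds yinf)) :
    ∀ t : ℝ, t₀ ≤ t →
      ‖y t - yinf‖ ≤ (1 / m) * |S (y 0) - τ| * Real.exp (-lam * t) := by
  intro t ht
  have hdecay : ∀ u, 0 ≤ u → S (y u) - τ = (S (y 0) - τ) * exp (-lam * u) := fun u hu => by
    simpa using eq_mul_exp_of_hasDerivAt_eq_mul (f := fun u => S (y u) - τ)
      (fun u hu => (hy u hu).sub_threshold_of_ncVel (hS _) (hgrad u hu)) hu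
  have hspeed : ∀ u, t ≤ u →
      ‖ncVel S τ lam (y u)‖ ≤ (1 / m) * |S (y 0) - τ| * lam * exp (-lam * u) := by
    intro u hu
    have hu₀ : 0 ≤ u := ht₀.trans (ht.trans hu)
    calc ‖ncVel S τ lam (y u)‖ ≤ |lam| * |S (y u) - τ| / m :=
          norm_ncVel_le hm (hlow u (ht.trans hu))
      _ = (1 / m) * |S (y 0) - τ| * lam * exp (-lam * u) := by
          rw [hdecay u hu₀, abs_mul, abs_of_pos hlam, abs_of_pos (exp_pos _)]; ring
  exact norm_sub_le_of_norm_deriv_le_exp hlam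
    (fun u hu => hy u (ht₀.trans (ht.trans hu))) hspeed hlim
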